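/- Let W⁰ denote W evaluated at λ = 0, let σ = ε₁ + ⋯ + ε_{α−1}, and set Δ(M²) = W⁰₁₁ − z·W⁰₁₂. Then M^σ·Δ(M²) = Σ_{k=0}^{α−1} (−1)^k·M^{2(ε₁+⋯+ε_k)}, where the k = 0 term is 1 (Minkus' formula for the Alexander polynomial of the kmot group G(ε), with t = M²). -/

import Mathlib

abbrev Mat := Matrix (Fin 2) (Fin 2) ℂ

/-- The word `W = X^{ε₁} Y^{ε₂} X^{ε₃} Y^{ε₄} ⋯ X^{ε_{α−2}} Y^{ε_{α−1}}`
(letters with odd index are powers of `X`, even index powers of `Y`). -/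
noncomputable def Wword (α : ℕ) (ε : ℕ → ℤ) (X Y : Mat) : Mat :=
  ((List.range (α - 1)).map fun i =>
    (if (i + 1) % 2 = 1 then X else Y) ^ ε (i + 1)).prod

lemma Xpow_eq (M : ℂ) (hM0 : M ≠ 0) (e : ℤ) (he : e = 1 ∨ e = -1) :
    (!![M, 1; 0, M⁻¹] : Mat) ^ e = !![M ^ e, (e : ℂ); 0, M ^ (-e)] := by
  rcases he with rfl | rfl
  · norm_num
  · rw [zpow_neg_one, Matrix.inv_def, Matrix.adjugate_fin_two, Matrix.det_fin_two_of]
    norm_num [mul_inv_cancel₀ hM0]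

lemma Ypow_eq (M : ℂ) (hM0 : M ≠ 0) (e : ℤ) (he : e = 1 ∨ e = -1) :
    (!![M, 0; 0, M⁻¹] : Mat) ^ e = !![M ^ e, 0; 0, M ^ (-e)] := by
  rcases he with rfl | rfl
  · norm_num
  · rw [zpow_neg_one, Matrix.inv_def, Matrix.adjugate_fin_two, Matrix.det_fin_two_of]
    norm_num [mul_inv_cancel₀ hM0]

lemma key (M : ℂ) (hM0 : M ≠ 0) (α : ℕ) (ε : ℕ → ℤ)
    (hε : ∀ i, 1 ≤ i → i ≤ α - 1 → ε i = 1 ∨ ε i = -1) :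
    ∀ m : ℕ, 2 * m ≤ α - 1 →
      (Wword (2*m+1) ε !![M,1;0,M⁻¹] !![M,0;0,M⁻¹]) 0 0
          = M ^ (∑ i ∈ Finset.Icc 1 (2*m), ε i) ∧
      M ^ (2 * ∑ i ∈ Finset.Icc 1 (2*m), ε i)
          - (M - M⁻¹) * (M ^ (∑ i ∈ Finset.Icc 1 (2*m), ε i)
            * (Wword (2*m+1) ε !![M,1;0,M⁻¹] !![M,0;0,M⁻¹]) 0 1)
        = ∑ k ∈ Finset.range (2*m+1), (-1:ℂ)^k * M ^ (2 * ∑ i ∈ Finset.Icc 1 k, ε i) := by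
  intro m
  induction m with
  | zero => intro _; simp [Wword, Matrix.one_apply]
  | succ m ih =>
    intro hm
    obtain ⟨h00, hF⟩ := ih (by omega)
    have he1 := hε (2*m+1) (by omega) (by omega)
    have he2 := hε (2*m+2) (by omega) (by omega)
    set e1 := ε (2*m+1) with he1d
    set e2 := ε (2*m+2) with he2d
    set X : Mat := !![M,1;0,M⁻¹]
    set Y : Mat := !![M,0;0,M⁻¹]
    have hw : Wword (2*(m+1)+1) ε X Y = Wword (2*m+1) ε X Y * (X ^ e1 * Y ^ e2) := by
      have h1 : (2*m+1) % 2 = 1 := by omega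
      have h2 : (2*m+1+1) % 2 = 0 := by omega
      have h3 : 2*(m+1)+1-1 = (2*m+1)+1 := by omega
      simp [Wword, h3, List.range_succ, h1, h2, mul_assoc, he1d, he2d]
    have hB : X ^ e1 * Y ^ e2 = !![M^(e1+e2), (e1:ℂ) * M^(-e2); 0, M^(-(e1+e2))] := by
      rw [Xpow_eq M hM0 e1 he1, Ypow_eq M hM0 e2 he2, Matrix.mul_fin_two]
      norm_num [zpow_add₀ hM0, zpow_neg, mul_comm]
    set A := Wword (2*m+1) ε X Y with hA
    set s : ℤ := ∑ i ∈ Finset.Icc 1 (2*m), ε i with hs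
    have hs1 : ∑ i ∈ Finset.Icc 1 (2*m+1), ε i = s + e1 := by
      rw [Finset.sum_Icc_succ_top (by omega)]
    have hs2b : ∑ i ∈ Finset.Icc 1 (2*m+2), ε i = s + e1 + e2 := by
      have h1 : 2*m+2 = (2*m+1)+1 := by ring
      rw [h1, Finset.sum_Icc_succ_top (by omega), hs1]
    have hs2 : ∑ i ∈ Finset.Icc 1 (2*(m+1)), ε i = s + e1 + e2 := by
      have h1 : 2*(m+1) = 2*m+2 := by ring
      rw [h1, hs2b]
    have hW00 : Wword (2*(m+1)+1) ε X Y 0 0 = M ^ (s + e1 + e2) := by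
      rw [hw, hB, Matrix.mul_apply, Fin.sum_univ_two]
      simp [h00, ← zpow_add₀ hM0, add_assoc]
    have hW01 : Wword (2*(m+1)+1) ε X Y 0 1
        = M ^ s * ((e1:ℂ) * M^(-e2)) + A 0 1 * M^(-(e1+e2)) := by
      rw [hw, hB, Matrix.mul_apply, Fin.sum_univ_two]
      simp [h00]
    constructor
    · rw [hW00, hs2]
    · rw [hW01, hs2]
      have hsum : ∑ k ∈ Finset.range (2*(m+1)+1), (-1:ℂ)^k * M ^ (2 * ∑ i ∈ Finset.Icc 1 k, ε i)
          = (∑ k ∈ Finset.range (2*m+1), (-1:ℂ)^k * M ^ (2 * ∑ i ∈ Finset.Icc 1 k, ε i))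
            - M ^ (2*(s+e1)) + M ^ (2*(s+e1+e2)) := by
        have h1 : 2*(m+1)+1 = (2*m+1)+1+1 := by ring
        rw [h1, Finset.sum_range_succ, Finset.sum_range_succ, hs1]
        norm_num [hs2b]
        have hp2 : (-1:ℂ)^(2*m+2) = 1 := Even.neg_one_pow ⟨m+1, by ring⟩
        rw [hp2]; simp only [pow_succ, pow_mul, neg_one_sq, one_pow]; ring
      rw [hsum, ← hF]
      rcases he1 with h1 | h1 <;> rcases he2 with h2 | h2 <;>
        rw [h1, h2] <;>
        · simp only [two_mul, zpow_add₀ hM0, zpow_neg, zpow_one, neg_add, zpow_sub₀ hM0,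
            Int.cast_one, Int.cast_neg, zpow_neg_one]
          field_simp
          ring

/-- Minkus' formula.
Let `W⁰` be `W` with `λ = 0`, `σ = ε₁ + ⋯ + ε_{α−1}`, and
`Δ(M²) = W⁰₁₁ − z·W⁰₁₂`.  Then
`M^σ·Δ(M²) = Σ_{k=0}^{α−1} (−1)^k·M^{2(ε₁+⋯+ε_k)}` (the `k = 0` term being `1`). -/
theorem minkus_formula (M : ℂ) (hM0 : M ≠ 0) (hM1 : M ≠ 1) (hMneg1 : M ≠ -1)
    (α : ℕ) (hodd : Odd α) (hα : 3 ≤ α) (ε : ℕ → ℤ)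
    (hε : ∀ i, 1 ≤ i → i ≤ α - 1 → ε i = 1 ∨ ε i = -1)
    (hsym : ∀ i, 1 ≤ i → i ≤ α - 1 → ε i = ε (α - i))
    (W0 : Mat) (hW0 : W0 = Wword α ε !![M, 1; 0, M⁻¹] !![M, 0; 0, M⁻¹]) :
    M ^ (∑ i ∈ Finset.Icc 1 (α - 1), ε i) * (W0 0 0 - (M - M⁻¹) * W0 0 1) =
      ∑ k ∈ Finset.range α, (-1 : ℂ) ^ k * M ^ (2 * ∑ i ∈ Finset.Icc 1 k, ε i) := by
  obtain ⟨m, hm⟩ := hodd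
  subst hm
  obtain ⟨h00, hF⟩ := key M hM0 (2*m+1) ε hε m (by omega)
  simp only [Nat.add_sub_cancel] at *
  rw [hW0, h00, ← hF, two_mul (∑ i ∈ Finset.Icc 1 (2*m), ε i), zpow_add₀ hM0]
  ring
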